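/- For every integer n ≥ 0, 2·P_e(2n+1) = c_{2n+1} + (−1)^{n+1} c_n and 2·P_o(2n+1) = c_{2n+1} − (−1)^{n+1} c_n, as identities of integers. -/

import Mathlib

/-- A plane tree: a root together with a finite ordered list of plane subtrees. -/
inductive PlaneTree : Type
  | node : List PlaneTree → PlaneTree

namespace PlaneTree

/-- The number of vertices of a plane tree. -/
def numVertices : PlaneTree → ℕ
  | node ts => 1 + (ts.attach.map fun x => numVertices x.1).sum
decreasing_by
  have := List.sizeOf_lt_of_mem x.2
  simp only [PlaneTree.node.sizeOf_spec]
  omega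

/-- The number of edges of a plane tree: one less than the number of vertices. -/
def numEdges (t : PlaneTree) : ℕ := t.numVertices - 1

/-- The number of leaves (vertices with no children) of a plane tree. -/
def numLeaves : PlaneTree → ℕ
  | node [] => 1
  | node (t :: ts) => ((t :: ts).attach.map fun x => numLeaves x.1).sum
decreasing_by
  have := List.sizeOf_lt_of_mem x.2
  simp only [PlaneTree.node.sizeOf_spec]
  omega

end PlaneTree

namespace PlaneTree

lemma numVertices_node (ts : List PlaneTree) :
    numVertices (node ts) = 1 + (ts.map numVertices).sum := by
  rw [numVertices]
  simp [List.attach_map_val]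

lemma numLeaves_nil : numLeaves (node []) = 1 := by rw [numLeaves]

lemma numLeaves_cons (t : PlaneTree) (ts : List PlaneTree) :
    numLeaves (node (t :: ts)) = numLeaves t + (ts.map numLeaves).sum := by
  rw [numLeaves]
  simp [List.attach_map_val]

def children : PlaneTree → List PlaneTree
  | node ts => ts

@[simp] lemma node_children (t : PlaneTree) : node t.children = t := by cases t; rfl

def toTree : PlaneTree → BinaryTree Unit
  | node [] => BinaryTree.nil
  | node (t :: ts) => BinaryTree.node () t.toTree (node ts).toTree
decreasing_by
  all_goals simp only [PlaneTree.node.sizeOf_spec, List.cons.sizeOf_spec]; omega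

def ofTree : BinaryTree Unit → PlaneTree
  | BinaryTree.nil => node []
  | BinaryTree.node _ l r => node (ofTree l :: (ofTree r).children)

lemma toTree_ofTree : ∀ b : BinaryTree Unit, toTree (ofTree b) = b
  | BinaryTree.nil => by rw [ofTree, toTree]
  | BinaryTree.node _ l r => by
      rw [ofTree, toTree, toTree_ofTree l]
      have := toTree_ofTree r
      rw [node_children, this]

lemma ofTree_toTree : ∀ t : PlaneTree, ofTree (toTree t) = t
  | node [] => by rw [toTree, ofTree]
  | node (t :: ts) => by
      rw [toTree, ofTree, ofTree_toTree t, ofTree_toTree (node ts)]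
      rfl
decreasing_by
  all_goals simp only [PlaneTree.node.sizeOf_spec, List.cons.sizeOf_spec]; omega

end PlaneTree

namespace PTAux

def g : BinaryTree Unit → ℕ
  | BinaryTree.nil => 1
  | BinaryTree.node _ l BinaryTree.nil => g l
  | BinaryTree.node _ l (BinaryTree.node u rl rr) => g l + g (BinaryTree.node u rl rr)

open Finset

def S (m : ℕ) : ℤ := ∑ b ∈ BinaryTree.treesOfNumNodesEq m, (-1 : ℤ) ^ (g b)

lemma S_zero : S 0 = -1 := by
  simp [S, BinaryTree.treesOfNumNodesEq_zero, g]

lemma treesOfNumNodesEq_ne_nil {b : BinaryTree Unit} {k : ℕ} (hb : b ∈ BinaryTree.treesOfNumNodesEq (k+1)) :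
    b ≠ BinaryTree.nil := by
  intro h
  subst h
  simp [BinaryTree.mem_treesOfNumNodesEq] at hb

lemma inner (ij : ℕ × ℕ) :
    (∑ b ∈ BinaryTree.pairwiseNode (BinaryTree.treesOfNumNodesEq ij.1) (BinaryTree.treesOfNumNodesEq ij.2),
      (-1 : ℤ) ^ (g b)) =
      S ij.1 * S ij.2 + (if ij.2 = 0 then 2 * S ij.1 else 0) := by
  obtain ⟨i, j⟩ := ij
  rw [Finset.sum_map, Finset.sum_product]
  cases j with
  | zero =>
    simp only [BinaryTree.treesOfNumNodesEq_zero, Finset.sum_singleton]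
    have : ∀ l : BinaryTree Unit, g (BinaryTree.node () l BinaryTree.nil) = g l := fun l => rfl
    show ∑ x ∈ BinaryTree.treesOfNumNodesEq i, (-1 : ℤ) ^ g (BinaryTree.node () x BinaryTree.nil) = _
    simp only [this]
    simp only [S, BinaryTree.treesOfNumNodesEq_zero, Finset.sum_singleton]
    have : g BinaryTree.nil = 1 := rfl
    rw [this, if_true]
    ring
  | succ k =>
    show ∑ x ∈ BinaryTree.treesOfNumNodesEq i, ∑ y ∈ BinaryTree.treesOfNumNodesEq (k + 1), (-1 : ℤ) ^ g (BinaryTree.node () x y) = _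
    have : ∀ l : BinaryTree Unit, ∀ r ∈ BinaryTree.treesOfNumNodesEq (k+1),
        (-1 : ℤ) ^ g (BinaryTree.node () l r) = (-1) ^ g l * (-1) ^ g r := by
      intro l r hr
      have hne : r ≠ BinaryTree.nil := treesOfNumNodesEq_ne_nil hr
      have : g (BinaryTree.node () l r) = g l + g r := by
        cases r with
        | nil => exact absurd rfl hne
        | node u rl rr => rfl
      rw [this, pow_add]
    rw [Finset.sum_congr rfl fun l _ => Finset.sum_congr rfl fun r hr => this l r hr]
    simp only [← Finset.mul_sum, ← Finset.sum_mul]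
    simp [S]

lemma S_succ (m : ℕ) :
    S (m + 1) = (∑ ij ∈ antidiagonal m, S ij.1 * S ij.2) + 2 * S m := by
  rw [S, BinaryTree.treesOfNumNodesEq_succ, Finset.sum_biUnion]
  · rw [Finset.sum_congr rfl fun ij _ => inner ij, Finset.sum_add_distrib]
    congr 1
    rw [Finset.sum_eq_single (m, 0)]
    · rw [if_pos rfl]
    · rintro ⟨a, b⟩ hab hne
      rw [Finset.HasAntidiagonal.mem_antidiagonal] at hab
      have : b ≠ 0 := by
        intro h
        exact hne (by simp [Prod.ext_iff]; omega)
      rw [if_neg this]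
    · intro h
      exact absurd (by simp [Finset.mem_antidiagonal]) h
  · simp_rw [Set.PairwiseDisjoint, Set.Pairwise, Finset.disjoint_left]
    rintro ⟨i, j⟩ _ ⟨i', j'⟩ _ h a ha ha'
    apply h
    cases a with
    | nil => simp at ha
    | node v l r =>
      simp only [BinaryTree.pairwiseNode, Finset.mem_map, Finset.mem_product,
        Function.Embedding.coeFn_mk, Prod.exists] at ha ha'
      obtain ⟨x, y, ⟨hx, hy⟩, hxy⟩ := ha
      obtain ⟨x', y', ⟨hx', hy'⟩, hxy'⟩ := ha'
      cases hxy; cases hxy'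
      rw [BinaryTree.mem_treesOfNumNodesEq] at hx hy hx' hy'
      simp [Prod.ext_iff]; omega

end PTAux

namespace PTAux2
open Finset PTAux

lemma S_succ' (m : ℕ) :
    S (m + 1) = (∑ k ∈ range (m + 1), S k * S (m - k)) + 2 * S m := by
  rw [S_succ, Finset.Nat.sum_antidiagonal_eq_sum_range_succ_mk]

lemma sign_helper {a n : ℕ} (h : a ≤ n) :
    ((-1 : ℤ) ^ (a + 1)) * ((-1 : ℤ) ^ (n - a + 1)) = (-1) ^ (n + 2) := by
  rw [← pow_add]
  have h2 : (a + 1) + (n - a + 1) = n + 2 := by omega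
  rw [h2]

lemma S_val : ∀ m : ℕ, (S (2 * m) = if m = 0 then -1 else 0) ∧
    S (2 * m + 1) = (-1) ^ (m + 1) * catalan m := by
  intro m
  induction m using Nat.strong_induction_on with
  | _ m ih =>
  have he : S (2 * m) = if m = 0 then -1 else 0 := by
    cases m with
    | zero => simpa using S_zero
    | succ p =>
      rw [if_neg (Nat.succ_ne_zero p)]
      have h1 : 2 * (p + 1) = (2 * p + 1) + 1 := by ring
      rw [h1, S_succ']
      have hzero : ∀ k ∈ range (2 * p + 1 + 1), k ∉ ({0, 2 * p + 1} : Finset ℕ) →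
          S k * S (2 * p + 1 - k) = 0 := by
        intro k hk hk'
        simp only [Finset.mem_range] at hk
        simp only [Finset.mem_insert, Finset.mem_singleton] at hk'
        push_neg at hk'
        obtain ⟨hk0, hk1⟩ := hk'
        rcases Nat.even_or_odd k with ⟨b, hb⟩ | ⟨a, ha⟩
        · have hb' : k = 2 * b := by omega
          have hb1 : b ≠ 0 := by omega
          have hblt : b < p + 1 := by omega
          rw [hb', ((ih b hblt).1), if_neg hb1, zero_mul]
        · have hpart : 2 * p + 1 - k = 2 * (p - a) := by omega
          have hne : p - a ≠ 0 := by omega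
          have hlt : p - a < p + 1 := by omega
          rw [hpart, (ih (p - a) hlt).1, if_neg hne, mul_zero]
      rw [← Finset.sum_subset (by intro x hx; simp at hx ⊢; omega) hzero]
      rw [Finset.sum_pair (show (0 : ℕ) ≠ 2 * p + 1 by omega)]
      simp only [Nat.sub_zero, Nat.sub_self, S_zero]
      ring
  refine ⟨he, ?_⟩
  cases m with
  | zero =>
    rw [show 2 * 0 + 1 = 0 + 1 from rfl, S_succ']
    simp [S_zero]
  | succ n =>
    have hSe : S (2 * (n + 1)) = 0 := by rw [he, if_neg (Nat.succ_ne_zero n)]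
    have h1 : 2 * (n + 1) + 1 = (2 * (n + 1)) + 1 := rfl
    rw [h1, S_succ', hSe, mul_zero, add_zero]
    have hsub : (range (n + 1)).image (fun a => 2 * a + 1) ⊆ range (2 * (n + 1) + 1) := by
      intro x hx
      simp only [Finset.mem_image, Finset.mem_range] at hx ⊢
      obtain ⟨a, ha, rfl⟩ := hx
      omega
    have hzero : ∀ k ∈ range (2 * (n + 1) + 1),
        k ∉ (range (n + 1)).image (fun a => 2 * a + 1) →
        S k * S (2 * (n + 1) - k) = 0 := by
      intro k hk hk'
      simp only [Finset.mem_range] at hk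
      simp only [Finset.mem_image, Finset.mem_range] at hk'
      push_neg at hk'
      have hkeven : ∃ b, k = 2 * b := by
        rcases Nat.even_or_odd k with ⟨b, hb⟩ | ⟨a, ha⟩
        · exact ⟨b, by omega⟩
        · exact (hk' a (by omega) (by omega)).elim
      obtain ⟨b, rfl⟩ := hkeven
      rcases Nat.eq_zero_or_pos b with rfl | hb1
      · simp only [Nat.mul_zero, Nat.sub_zero, S_zero]
        rw [hSe, mul_zero]
      · rcases eq_or_lt_of_le (show b ≤ n + 1 by omega) with rfl | hblt
        · rw [hSe, zero_mul]
        · rw [(ih b hblt).1, if_neg (by omega), zero_mul]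
    rw [← Finset.sum_subset hsub hzero]
    rw [Finset.sum_image (by intro a _ b _ h; simp only at h; omega)]
    have hterm : ∀ a ∈ range (n + 1),
        S (2 * a + 1) * S (2 * (n + 1) - (2 * a + 1)) =
          (-1) ^ (n + 2) * ((catalan a : ℤ) * (catalan (n - a) : ℤ)) := by
      intro a ha
      simp only [Finset.mem_range] at ha
      have hpart : 2 * (n + 1) - (2 * a + 1) = 2 * (n - a) + 1 := by omega
      rw [hpart, (ih a (by omega)).2, (ih (n - a) (by omega)).2]
      rw [show ((-1 : ℤ) ^ (a + 1) * catalan a) * ((-1) ^ (n - a + 1) * catalan (n - a)) =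
        ((-1 : ℤ) ^ (a + 1) * (-1) ^ (n - a + 1)) * ((catalan a : ℤ) * catalan (n - a)) by ring]
      rw [sign_helper (by omega : a ≤ n)]
    rw [Finset.sum_congr rfl hterm, ← Finset.mul_sum]
    have hcat : ∑ a ∈ range (n + 1), ((catalan a : ℤ) * (catalan (n - a) : ℤ)) =
        (catalan (n + 1) : ℤ) := by
      rw [catalan_succ', Finset.Nat.sum_antidiagonal_eq_sum_range_succ_mk]
      push_cast
      rfl
    rw [hcat]

end PTAux2

namespace PTAux
open PlaneTree

lemma numVertices_ofTree : ∀ b : BinaryTree Unit, numVertices (ofTree b) = b.numNodes + 1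
  | BinaryTree.nil => by rw [ofTree, numVertices_node]; rfl
  | BinaryTree.node _ l r => by
      rw [ofTree, numVertices_node]
      have hl := numVertices_ofTree l
      have hr := numVertices_ofTree r
      have hc : numVertices (node (ofTree r).children) = numVertices (ofTree r) := by
        rw [node_children]
      rw [List.map_cons, List.sum_cons, hl]
      have : ((ofTree r).children.map numVertices).sum = numVertices (ofTree r) - 1 := by
        rw [← hc, numVertices_node]; omega
      rw [this, hr]
      simp [BinaryTree.numNodes]
      omega

lemma numEdges_ofTree (b : BinaryTree Unit) : numEdges (ofTree b) = b.numNodes := by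
  rw [numEdges, numVertices_ofTree]; omega

lemma numLeaves_ofTree : ∀ b : BinaryTree Unit, numLeaves (ofTree b) = g b
  | BinaryTree.nil => by rw [ofTree]; exact numLeaves_nil
  | BinaryTree.node _ l BinaryTree.nil => by
      rw [ofTree, show (ofTree BinaryTree.nil).children = [] from rfl, numLeaves_cons]
      rw [numLeaves_ofTree l]
      simp [g]
  | BinaryTree.node _ l (BinaryTree.node u rl rr) => by
      have hr := numLeaves_ofTree (BinaryTree.node u rl rr)
      have hl := numLeaves_ofTree l
      rw [ofTree, numLeaves_cons, hl]
      rw [show ofTree (BinaryTree.node u rl rr) = node (ofTree rl :: (ofTree rr).children) from rfl]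
        at hr ⊢
      rw [show (node (ofTree rl :: (ofTree rr).children)).children
            = ofTree rl :: (ofTree rr).children from rfl]
      rw [numLeaves_cons] at hr
      rw [show g (BinaryTree.node () l (BinaryTree.node u rl rr)) = g l + g (BinaryTree.node u rl rr) from rfl, ← hr]
      rw [List.map_cons, List.sum_cons]

lemma toTree_injective : Function.Injective toTree := by
  intro a b h
  have := congrArg ofTree h
  rwa [ofTree_toTree, ofTree_toTree] at this

lemma card_aux (P : ℕ → Prop) [DecidablePred P] (m : ℕ) :
    {t : PlaneTree | t.numEdges = m ∧ P t.numLeaves}.ncard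
      = ((BinaryTree.treesOfNumNodesEq m).filter fun b => P (g b)).card := by
  have himg : toTree '' {t : PlaneTree | t.numEdges = m ∧ P t.numLeaves}
      = ↑((BinaryTree.treesOfNumNodesEq m).filter fun b => P (g b)) := by
    ext b
    simp only [Set.mem_image, Set.mem_setOf_eq, Finset.coe_filter,
      BinaryTree.mem_treesOfNumNodesEq]
    constructor
    · rintro ⟨t, ⟨h1, h2⟩, rfl⟩
      constructor
      · rw [← numEdges_ofTree (toTree t), ofTree_toTree]; exact h1
      · rw [← numLeaves_ofTree (toTree t), ofTree_toTree]; exact h2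
    · rintro ⟨h1, h2⟩
      refine ⟨ofTree b, ⟨by rwa [numEdges_ofTree], ?_⟩, toTree_ofTree b⟩
      rw [numLeaves_ofTree]; exact h2
  rw [← Set.ncard_image_of_injective _ toTree_injective, himg, Set.ncard_coe_finset]

end PTAux

open Finset PTAux PTAux2 PlaneTree

/-- For every integer `n ≥ 0`, `2·P_e(2n+1) = c_{2n+1} + (-1)^{n+1} c_n` and
`2·P_o(2n+1) = c_{2n+1} - (-1)^{n+1} c_n`, as identities of integers. -/
theorem two_mul_even_and_odd_leaves_card_odd_edges (n : ℕ) :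
    2 * ({t : PlaneTree | t.numEdges = 2 * n + 1 ∧ Even t.numLeaves}.ncard : ℤ) =
        catalan (2 * n + 1) + (-1) ^ (n + 1) * catalan n ∧
    2 * ({t : PlaneTree | t.numEdges = 2 * n + 1 ∧ Odd t.numLeaves}.ncard : ℤ) =
        catalan (2 * n + 1) - (-1) ^ (n + 1) * catalan n := by
  set m := 2 * n + 1 with hm
  set A : ℕ := ((BinaryTree.treesOfNumNodesEq m).filter fun b => Even (g b)).card with hA
  set B : ℕ := ((BinaryTree.treesOfNumNodesEq m).filter fun b => Odd (g b)).card with hB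
  have hAB : A + B = catalan m := by
    rw [hA, hB, ← BinaryTree.treesOfNumNodesEq_card_eq_catalan]
    rw [show ((BinaryTree.treesOfNumNodesEq m).filter fun b => Odd (g b))
        = ((BinaryTree.treesOfNumNodesEq m).filter fun b => ¬ Even (g b)) from
      Finset.filter_congr fun b _ => by rw [Nat.not_even_iff_odd]]
    exact Finset.card_filter_add_card_filter_not _
  have hS : (A : ℤ) - B = S m := by
    rw [S, ← Finset.sum_filter_add_sum_filter_not (BinaryTree.treesOfNumNodesEq m)
      (fun b => Even (g b))]
    rw [Finset.sum_congr rfl (fun b hb => (Finset.mem_filter.mp hb).2.neg_one_pow),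
      Finset.sum_congr rfl (fun b hb =>
        ((Nat.not_even_iff_odd.mp (Finset.mem_filter.mp hb).2)).neg_one_pow)]
    rw [hA, hB]
    rw [show ((BinaryTree.treesOfNumNodesEq m).filter fun b => Odd (g b))
        = ((BinaryTree.treesOfNumNodesEq m).filter fun b => ¬ Even (g b)) from
      Finset.filter_congr fun b _ => by rw [Nat.not_even_iff_odd]]
    simp only [Finset.sum_const, nsmul_eq_mul, mul_one, mul_neg]
    ring
  have hSval : S m = (-1) ^ (n + 1) * catalan n := (S_val n).2
  have hABZ : (A : ℤ) + B = catalan m := by exact_mod_cast congrArg (Nat.cast : ℕ → ℤ) hAB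
  constructor
  · rw [card_aux Even m, ← hA, ← hSval]
    linarith
  · rw [card_aux Odd m, ← hB, ← hSval]
    linarith
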